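/- Assume 0 < ε < c1·c2·(μ2 − μ1)/(c1·μ1 + c2·μ2). Then E_ε is strictly increasing on [ω_(ε,1), ∞): for all real ω_(ε,1) ≤ ω < ω', one has E_ε(ω) < E_ε(ω'). -/

import Mathlib

/-- Relaxed iteration count of a single task with constant `c`, eigenvalue `μ`,
contraction factor `lam`, at initial-guess coefficient `ω`. -/
noncomputable def Leps (ε c μ lam ω : ℝ) : ℝ :=
  if ω * μ = 1 then 0
  else max 0 (Real.log (ε / (c * |ω * μ - 1|)) / Real.log lam)

/-- Expected relaxed iteration count over the two tasks. -/
noncomputable def Eeps (p ε c1 c2 μ1 μ2 l1 l2 ω : ℝ) : ℝ :=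
  p * Leps ε c1 μ1 l1 ω + (1 - p) * Leps ε c2 μ2 l2 ω

/-- `ω_(ε,1) = 1/μ1 − ε/(c1·μ1)`. -/
noncomputable def omegaE1 (ε c1 μ1 : ℝ) : ℝ := 1 / μ1 - ε / (c1 * μ1)

/-- `ω_(ε,2) = 1/μ2 + ε/(c2·μ2)`. -/
noncomputable def omegaE2 (ε c2 μ2 : ℝ) : ℝ := 1 / μ2 + ε / (c2 * μ2)

/-- Threshold probability `p_ε`. -/
noncomputable def pEps (ε c1 c2 μ1 μ2 l1 l2 : ℝ) : ℝ :=
  Leps ε c2 μ2 l2 (omegaE1 ε c1 μ1) /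
  (Leps ε c1 μ1 l1 (omegaE2 ε c2 μ2) + Leps ε c2 μ2 l2 (omegaE1 ε c1 μ1))

/-- Limiting threshold probability `p_0`. -/
noncomputable def pZero (l1 l2 : ℝ) : ℝ :=
  Real.log l1 / (Real.log l1 + Real.log l2)

/-!
A single task's count depends on `ω` only through `t = ω μ - 1`: it vanishes for `|t| ≤ ε / c`
and equals `log (ε / (c t)) / log λ` for `t ≥ ε / c`. Hence it is nondecreasing from
`(1 - ε / c) / μ` on and strictly increasing from `(1 + ε / c) / μ` on; these thresholds are
`omegaE1` and `omegaE2` evaluated at that task's constants. The bound on `ε` says exactly that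
`ω_(ε,2) < ω_(ε,1)`, so beyond `ω_(ε,1)` the first task is nondecreasing and the second, which
carries the positive weight `1 - p`, strictly increasing.
-/

open Set

section Leps

variable {ε c μ lam : ℝ}

lemma Leps_nonneg (ω : ℝ) : 0 ≤ Leps ε c μ lam ω := by
  unfold Leps
  split_ifs
  exacts [le_rfl, le_max_left _ _]

lemma Leps_eq_zero_of_abs_le (hc : 0 < c) (hlam : Real.log lam < 0) {ω : ℝ}
    (h : |ω * μ - 1| ≤ ε / c) : Leps ε c μ lam ω = 0 := by
  unfold Leps
  split_ifs with h1
  · rfl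
  have habs : 0 < |ω * μ - 1| := abs_pos.mpr (sub_ne_zero.mpr h1)
  have hone : 1 ≤ ε / (c * |ω * μ - 1|) := by
    rw [le_div_iff₀ (by positivity)]
    rw [le_div_iff₀ hc] at h
    linarith
  exact max_eq_left (div_nonpos_of_nonneg_of_nonpos (Real.log_nonneg hone) hlam.le)

lemma Leps_eq_of_le (hε : 0 < ε) (hc : 0 < c) (hlam : Real.log lam < 0) {ω : ℝ}
    (h : ε / c ≤ ω * μ - 1) :
    Leps ε c μ lam ω = Real.log (ε / (c * (ω * μ - 1))) / Real.log lam := by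
  have ht : 0 < ω * μ - 1 := (div_pos hε hc).trans_le h
  have hle_one : ε / (c * (ω * μ - 1)) ≤ 1 := by
    rw [div_le_one (by positivity)]
    rw [div_le_iff₀ hc] at h
    linarith
  unfold Leps
  rw [if_neg (by linarith), abs_of_pos ht]
  exact max_eq_right
    (div_nonneg_of_nonpos (Real.log_nonpos (by positivity) hle_one) hlam.le)

lemma omegaE1_le_iff (hc : 0 < c) (hμ : 0 < μ) {ω : ℝ} :
    omegaE1 ε c μ ≤ ω ↔ -(ε / c) ≤ ω * μ - 1 := by
  have : omegaE1 ε c μ = (1 - ε / c) / μ := by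
    unfold omegaE1
    field_simp
  rw [this, div_le_iff₀ hμ]
  constructor <;> intro h <;> linarith

lemma omegaE2_le_iff (hc : 0 < c) (hμ : 0 < μ) {ω : ℝ} :
    omegaE2 ε c μ ≤ ω ↔ ε / c ≤ ω * μ - 1 := by
  have : omegaE2 ε c μ = (1 + ε / c) / μ := by
    unfold omegaE2
    field_simp
  rw [this, div_le_iff₀ hμ]
  constructor <;> intro h <;> linarith

lemma Leps_strictMonoOn (hε : 0 < ε) (hc : 0 < c) (hμ : 0 < μ) (hlam : Real.log lam < 0) :
    StrictMonoOn (Leps ε c μ lam) (Ici (omegaE2 ε c μ)) := by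
  intro ω hω ω' hω' hlt
  rw [mem_Ici, omegaE2_le_iff hc hμ] at hω hω'
  rw [Leps_eq_of_le hε hc hlam hω, Leps_eq_of_le hε hc hlam hω']
  have ht : 0 < ω * μ - 1 := (div_pos hε hc).trans_le hω
  have hlt' : ω * μ - 1 < ω' * μ - 1 := by nlinarith
  have ht' : 0 < ω' * μ - 1 := ht.trans hlt'
  refine div_lt_div_of_neg_of_lt hlam (Real.log_lt_log (by positivity) ?_)
  exact div_lt_div_of_pos_left hε (by positivity) (mul_lt_mul_of_pos_left hlt' hc)

lemma Leps_monotoneOn (hε : 0 < ε) (hc : 0 < c) (hμ : 0 < μ) (hlam : Real.log lam < 0) :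
    MonotoneOn (Leps ε c μ lam) (Ici (omegaE1 ε c μ)) := by
  intro ω hω ω' _ hle
  by_cases h2 : omegaE2 ε c μ ≤ ω
  · exact (Leps_strictMonoOn hε hc hμ hlam).monotoneOn h2 (h2.trans hle) hle
  rw [mem_Ici, omegaE1_le_iff hc hμ] at hω
  rw [omegaE2_le_iff hc hμ, not_le] at h2
  rw [Leps_eq_zero_of_abs_le hc hlam (abs_le.mpr ⟨hω, h2.le⟩)]
  exact Leps_nonneg ω'

end Leps

lemma omegaE2_lt_omegaE1 {ε c1 c2 μ1 μ2 : ℝ} (hμ1 : 0 < μ1) (hμ2 : 0 < μ2)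
    (hc1 : 0 < c1) (hc2 : 0 < c2)
    (hεlt : ε < c1 * c2 * (μ2 - μ1) / (c1 * μ1 + c2 * μ2)) :
    omegaE2 ε c2 μ2 < omegaE1 ε c1 μ1 := by
  rw [lt_div_iff₀ (by positivity)] at hεlt
  have hdiff : omegaE1 ε c1 μ1 - omegaE2 ε c2 μ2 =
      (c1 * c2 * (μ2 - μ1) - ε * (c1 * μ1 + c2 * μ2)) / (c1 * c2 * μ1 * μ2) := by
    unfold omegaE1 omegaE2
    field_simp
    ring
  have : 0 < omegaE1 ε c1 μ1 - omegaE2 ε c2 μ2 := by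
    rw [hdiff]
    exact div_pos (by linarith) (by positivity)
  linarith

lemma log_one_sub_half_neg {μ : ℝ} (hμ0 : 0 < μ) (hμ2 : μ < 2) : Real.log (1 - μ / 2) < 0 :=
  Real.log_neg (by linarith) (by linarith)

/-- For `0 < ε < c1·c2·(μ2−μ1)/(c1·μ1+c2·μ2)`, the expected iteration count `E_ε`
is strictly increasing on `[ω_(ε,1), ∞)`. -/
theorem Eeps_strictMono_right (μ1 μ2 l1 l2 c1 c2 p : ℝ)
    (hμ1 : 0 < μ1) (hμ12 : μ1 < μ2) (hμ2 : μ2 < 2)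
    (hl1 : l1 = 1 - μ1 / 2) (hl2 : l2 = 1 - μ2 / 2)
    (hc1 : 0 < c1) (hc2 : 0 < c2) (hp0 : 0 < p) (hp1 : p < 1)
    (ε : ℝ) (hε : 0 < ε)
    (hεlt : ε < c1 * c2 * (μ2 - μ1) / (c1 * μ1 + c2 * μ2)) :
    ∀ ω ω' : ℝ, omegaE1 ε c1 μ1 ≤ ω → ω < ω' →
      Eeps p ε c1 c2 μ1 μ2 l1 l2 ω < Eeps p ε c1 c2 μ1 μ2 l1 l2 ω' := by
  intro ω ω' hω hlt
  have hμ2pos : 0 < μ2 := hμ1.trans hμ12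
  subst hl1 hl2
  have hmono1 : Leps ε c1 μ1 (1 - μ1 / 2) ω ≤ Leps ε c1 μ1 (1 - μ1 / 2) ω' :=
    Leps_monotoneOn hε hc1 hμ1 (log_one_sub_half_neg hμ1 (hμ12.trans hμ2))
      hω (hω.trans hlt.le) hlt.le
  have hω2 : omegaE2 ε c2 μ2 ≤ ω := (omegaE2_lt_omegaE1 hμ1 hμ2pos hc1 hc2 hεlt).le.trans hω
  have hstrict2 : Leps ε c2 μ2 (1 - μ2 / 2) ω < Leps ε c2 μ2 (1 - μ2 / 2) ω' :=
    Leps_strictMonoOn hε hc2 hμ2pos (log_one_sub_half_neg hμ2pos hμ2)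
      hω2 (hω2.trans hlt.le) hlt
  exact add_lt_add_of_le_of_lt (mul_le_mul_of_nonneg_left hmono1 hp0.le)
    (mul_lt_mul_of_pos_left hstrict2 (sub_pos.mpr hp1))
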